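/- Let λ : (0,∞) → (0,1/4) be the inverse of θ(λ) = -1 + Artanh(√(1-4λ))/√(1-4λ). Then λ is differentiable and satisfies λ'(θ) = -2λ(1-4λ)/(1-4(θ+1)λ) for all θ > 0. -/

import Mathlib

/-!
With `u = √(1 - 4λ)` we have `θ(λ) + 1 = artanh u / u`. Since `artanh' u = 1 / (1 - u²) = 1 / (4λ)`,
the chain rule gives `θ'(λ) = -(1 - 4(θ(λ) + 1)λ) / (2λ(1 - 4λ))`, and the inequality
`(1 - u²) artanh u < u` (from comparing derivatives on `[0, u]`) makes it negative. So `θ` is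
strictly decreasing on `(0, 1/4)`; its inverse `λ` is then strictly decreasing on `(0, ∞)` with
open image `(0, 1/4)`, hence continuous, and the inverse function theorem gives `λ' = 1 / θ'(λ)`.
-/

open Real Filter Set

noncomputable def artanh (x : ℝ) : ℝ := (1/2) * Real.log ((1+x)/(1-x))

noncomputable def thetaF (l : ℝ) : ℝ := -1 + _root_.artanh (Real.sqrt (1-4*l)) / Real.sqrt (1-4*l)

open scoped Topology

lemma hasDerivAt_artanh {x : ℝ} (hx : x ∈ Ioo (-1 : ℝ) 1) :
    HasDerivAt _root_.artanh (1 / (1 - x ^ 2)) x := by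
  obtain ⟨hx₁, hx₂⟩ := hx
  have hadd : 1 + x ≠ 0 := by linarith
  have hsub : 1 - x ≠ 0 := by linarith
  have hsq : 1 - x ^ 2 ≠ 0 := by nlinarith
  have hquot := ((hasDerivAt_id' x).const_add 1).fun_div ((hasDerivAt_id' x).const_sub 1) hsub
  refine ((hquot.log (div_ne_zero hadd hsub)).const_mul (1 / 2)).congr_deriv ?_
  field_simp
  ring

lemma artanh_zero : _root_.artanh 0 = 0 := by simp [_root_.artanh]

lemma strictMonoOn_Ico_of_hasDerivAt_pos {f f' : ℝ → ℝ} {a b : ℝ}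
    (hf : ∀ x ∈ Ico a b, HasDerivAt f (f' x) x) (hf' : ∀ x ∈ Ioo a b, 0 < f' x) :
    StrictMonoOn f (Ico a b) :=
  strictMonoOn_of_hasDerivWithinAt_pos (convex_Ico a b)
    (fun x hx ↦ (hf x hx).continuousAt.continuousWithinAt)
    (fun x hx ↦ by
      rw [interior_Ico] at hx ⊢
      exact (hf x (Ioo_subset_Ico_self hx)).hasDerivWithinAt)
    (fun x hx ↦ by rw [interior_Ico] at hx; exact hf' x hx)

lemma lt_artanh {u : ℝ} (hu : u ∈ Ioo (0 : ℝ) 1) : u < _root_.artanh u := by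
  have hmono : StrictMonoOn (fun t ↦ _root_.artanh t - t) (Ico 0 1) := by
    refine strictMonoOn_Ico_of_hasDerivAt_pos
      (fun x hx ↦ (hasDerivAt_artanh ⟨by linarith [hx.1], hx.2⟩).fun_sub (hasDerivAt_id' x)) ?_
    intro x ⟨hx₀, hx₁⟩
    rw [sub_pos, lt_div_iff₀ (by nlinarith)]
    nlinarith
  simpa [_root_.artanh_zero] using hmono ⟨le_rfl, one_pos⟩ (Ioo_subset_Ico_self hu) hu.1

lemma one_sub_sq_mul_artanh_lt {u : ℝ} (hu : u ∈ Ioo (0 : ℝ) 1) :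
    (1 - u ^ 2) * _root_.artanh u < u := by
  have hderiv (x : ℝ) (hx : x ∈ Ico (0 : ℝ) 1) :
      HasDerivAt (fun t ↦ t / (1 - t ^ 2) - _root_.artanh t) (2 * x ^ 2 / (1 - x ^ 2) ^ 2) x := by
    have hx' : 1 - x ^ 2 ≠ 0 := by nlinarith [hx.1, hx.2]
    refine (((hasDerivAt_id' x).fun_div ((hasDerivAt_pow 2 x).const_sub 1) hx').fun_sub
      (hasDerivAt_artanh ⟨by linarith [hx.1], hx.2⟩)).congr_deriv ?_
    field_simp
    ring
  have hmono := strictMonoOn_Ico_of_hasDerivAt_pos hderiv fun x hx ↦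
    div_pos (by nlinarith [hx.1]) (pow_pos (by nlinarith [hx.1, hx.2]) 2)
  have hlt := hmono ⟨le_rfl, one_pos⟩ (Ioo_subset_Ico_self hu) hu.1
  simp only [_root_.artanh_zero, zero_div, sub_zero, sub_pos] at hlt
  rwa [← lt_div_iff₀' (by nlinarith [hu.1, hu.2])]

lemma sqrt_one_sub_four_mul_mem_Ioo {l : ℝ} (hl : l ∈ Ioo (0 : ℝ) (1 / 4)) :
    √(1 - 4 * l) ∈ Ioo (0 : ℝ) 1 :=
  ⟨Real.sqrt_pos.2 (by linarith [hl.2]), (Real.sqrt_lt' one_pos).2 (by linarith [hl.1])⟩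

lemma thetaF_pos {l : ℝ} (hl : l ∈ Ioo (0 : ℝ) (1 / 4)) : 0 < thetaF l := by
  have hu := sqrt_one_sub_four_mul_mem_Ioo hl
  have : 1 < _root_.artanh √(1 - 4 * l) / √(1 - 4 * l) := by
    rw [one_lt_div hu.1]
    exact lt_artanh hu
  rw [thetaF]
  linarith

lemma four_mul_thetaF_add_one_mul_lt_one {l : ℝ} (hl : l ∈ Ioo (0 : ℝ) (1 / 4)) :
    4 * (thetaF l + 1) * l < 1 := by
  have hu := sqrt_one_sub_four_mul_mem_Ioo hl
  have hsq : √(1 - 4 * l) ^ 2 = 1 - 4 * l := Real.sq_sqrt (by linarith [hl.2])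
  have := one_sub_sq_mul_artanh_lt hu
  rw [hsq, sub_sub_cancel] at this
  rw [thetaF, neg_add_cancel_comm, mul_comm 4, mul_assoc, div_mul_eq_mul_div, div_lt_one hu.1,
    mul_comm]
  exact this

noncomputable def thetaFDeriv (l : ℝ) : ℝ := -(1 - 4 * (thetaF l + 1) * l) / (2 * l * (1 - 4 * l))

lemma thetaFDeriv_neg {l : ℝ} (hl : l ∈ Ioo (0 : ℝ) (1 / 4)) : thetaFDeriv l < 0 := by
  have := four_mul_thetaF_add_one_mul_lt_one hl
  exact div_neg_of_neg_of_pos (by linarith) (mul_pos (by linarith [hl.1]) (by linarith [hl.2]))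

lemma hasDerivAt_thetaF {l : ℝ} (hl : l ∈ Ioo (0 : ℝ) (1 / 4)) :
    HasDerivAt thetaF (thetaFDeriv l) l := by
  have hu := sqrt_one_sub_four_mul_mem_Ioo hl
  have h4l : 0 < 1 - 4 * l := by linarith [hl.2]
  have hsqrt := (((hasDerivAt_id' l).const_mul 4).const_sub 1).sqrt h4l.ne'
  have hartanh := (hasDerivAt_artanh ⟨by linarith [hu.1], hu.2⟩).comp l hsqrt
  refine ((hartanh.fun_div hsqrt hu.1.ne').const_add (-1)).congr_deriv ?_
  have hsq : √(1 - 4 * l) ^ 2 = 1 - 4 * l := Real.sq_sqrt h4l.le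
  have hl0 := hl.1.ne'
  have hu0 := hu.1.ne'
  rw [thetaFDeriv, thetaF, hsq, Function.comp_apply]
  field_simp
  ring

lemma strictAntiOn_thetaF : StrictAntiOn thetaF (Ioo 0 (1 / 4)) := by
  refine strictAntiOn_of_hasDerivWithinAt_neg (convex_Ioo 0 (1 / 4)) (f' := thetaFDeriv)
    (fun l hl ↦ (hasDerivAt_thetaF hl).continuousAt.continuousWithinAt) ?_ ?_ <;>
    rw [interior_Ioo]
  · exact fun l hl ↦ (hasDerivAt_thetaF hl).hasDerivWithinAt
  · exact fun l hl ↦ thetaFDeriv_neg hl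

theorem stmt7 (lam : ℝ → ℝ)
    (hmem : ∀ θ > (0:ℝ), lam θ ∈ Set.Ioo (0:ℝ) (1/4))
    (hinv : ∀ θ > (0:ℝ), thetaF (lam θ) = θ) :
    ∀ θ > (0:ℝ),
      HasDerivAt lam (-(2 * lam θ * (1 - 4 * lam θ)) / (1 - 4*(θ+1)*lam θ)) θ := by
  intro θ hθ
  have hlam_thetaF : ∀ l ∈ Ioo (0 : ℝ) (1 / 4), lam (thetaF l) = l := fun l hl ↦
    strictAntiOn_thetaF.injOn (hmem _ (thetaF_pos hl)) hl (hinv _ (thetaF_pos hl))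
  have hanti : StrictAntiOn lam (Ioi 0) := fun a ha b hb hab ↦
    (strictAntiOn_thetaF.lt_iff_gt (hmem a ha) (hmem b hb)).1 (by rwa [hinv a ha, hinv b hb])
  have himage : lam '' Ioi 0 ∈ 𝓝 (lam θ) :=
    mem_of_superset (isOpen_Ioo.mem_nhds (hmem θ hθ))
      fun l hl ↦ ⟨thetaF l, thetaF_pos hl, hlam_thetaF l hl⟩
  have hcont : ContinuousAt lam θ :=
    hanti.dual_right.continuousAt_of_image_mem_nhds (Ioi_mem_nhds hθ) himage
  refine ((hasDerivAt_thetaF (hmem θ hθ)).of_local_left_inverse hcont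
    (thetaFDeriv_neg (hmem θ hθ)).ne (eventually_of_mem (Ioi_mem_nhds hθ) hinv)).congr_deriv ?_
  rw [thetaFDeriv, hinv θ hθ, inv_div, div_neg, neg_div]
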